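/- arXiv:1004.3635 — 2 statements merged into one kernel-verified Lean document; each statement's English description precedes it below -/
import Mathlib

section
/- Every language generated by a semi-conditional grammar of degree (1,1) (nonerasing, with the rewritten symbol included in the context check) is generated by some random context grammar (nonerasing, with the rewritten symbol excluded from the context check). That is, SC(1,1) ⊆ RC. -/
/-- Symbols: nonterminals `N` plus terminals `T`. -/
abbrev Symb (N T : Type) := N ⊕ T

/-- `alph w` is the set of symbols occurring in the string `w`. -/
def alph {α : Type} (w : List α) : Set α := {a | a ∈ w}

/-- A (nonerasing) random context grammar: finitely many productions
`(A → x, Per, For)` with `A ∈ N`, `x ∈ (N ∪ T)⁺`, `Per, For ⊆ N`. -/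
structure RCG (N T : Type) where
  rules : Set (N × List (Symb N T) × Set N × Set N)
  fin : rules.Finite
  ne : ∀ r ∈ rules, r.2.1 ≠ []
  start : N

/-- One derivation step of a random context grammar.  The flag `incl` tells whether
the rewritten symbol is included in the context check (`true`: conditions checked
against `alph (uAv)`; `false`: against `alph (uv)`). -/
def RCG.Step {N T : Type} (G : RCG N T) (incl : Bool)
    (s₁ s₂ : List (Symb N T)) : Prop :=
  ∃ A x Per For u v, (A, x, Per, For) ∈ G.rules ∧
    s₁ = u ++ Sum.inl A :: v ∧ s₂ = u ++ x ++ v ∧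
    (∀ B ∈ Per, Sum.inl B ∈ alph (if incl then s₁ else u ++ v)) ∧
    (∀ B ∈ For, Sum.inl B ∉ alph (if incl then s₁ else u ++ v))

/-- The language of a random context grammar (under the chosen derivation definition). -/
def RCG.Lang {N T : Type} (G : RCG N T) (incl : Bool) : Set (List T) :=
  {w | Relation.ReflTransGen (G.Step incl) [Sum.inl G.start] (w.map Sum.inr)}

/-- The family of random context languages over terminal alphabet `T`
(standard definition: rewritten symbol excluded from the context check). -/
def RC (T : Type) : Set (Set (List T)) :=
  {L | ∃ (N : Type) (G : RCG N T), G.Lang false = L}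

/-- A (nonerasing) semi-conditional grammar of degree (1,1): productions
`(A → x, Per, For)` with `Per, For ⊆ N ∪ T` of cardinality at most one. -/
structure SCG (N T : Type) where
  rules : Set (N × List (Symb N T) × Set (Symb N T) × Set (Symb N T))
  fin : rules.Finite
  ne : ∀ r ∈ rules, r.2.1 ≠ []
  per1 : ∀ r ∈ rules, r.2.2.1.Subsingleton
  for1 : ∀ r ∈ rules, r.2.2.2.Subsingleton
  start : N

/-- One derivation step of a semi-conditional grammar; `incl` as in `RCG.Step`. -/
def SCG.Step {N T : Type} (G : SCG N T) (incl : Bool)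
    (s₁ s₂ : List (Symb N T)) : Prop :=
  ∃ A x Per For u v, (A, x, Per, For) ∈ G.rules ∧
    s₁ = u ++ Sum.inl A :: v ∧ s₂ = u ++ x ++ v ∧
    Per ⊆ alph (if incl then s₁ else u ++ v) ∧
    (∀ a ∈ For, a ∉ alph (if incl then s₁ else u ++ v))

/-- The language of a semi-conditional grammar. -/
def SCG.Lang {N T : Type} (G : SCG N T) (incl : Bool) : Set (List T) :=
  {w | Relation.ReflTransGen (G.Step incl) [Sum.inl G.start] (w.map Sum.inr)}

/-- The family SC(1,1): inclusive derivation definition (context `alph (uAv)`). -/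
def SC11 (T : Type) : Set (Set (List T)) :=
  {L | ∃ (N : Type) (G : SCG N T), G.Lang true = L}

/-- The family SC'(1,1): exclusive derivation definition (context `alph (uv)`). -/
def SC11' (T : Type) : Set (Set (List T)) :=
  {L | ∃ (N : Type) (G : SCG N T), G.Lang false = L}

/-!
The random context grammar has nonterminals `N ⊕ T`, a copy `a'` standing in for each terminal
`a`, and keeps every rule `(A → x, Per, For)` on these copies. Since the rewritten `A` is always
present, the inclusive check of `G` is the exclusive one with `A` removed from `Per`, and rules
with `A ∈ For` never fire. Rules `(a' → a, ∅, N)` finally release the terminals; they apply only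
once no symbol of `N` is left, and from then on no simulated rule applies, so converted terminals
never disturb a context check. Reading each sentential form back with `a, a' ↦ a` turns every
derivation of the new grammar into one of `G`.
-/

@[simp] lemma mem_alph {α : Type} {a : α} {l : List α} : a ∈ alph l ↔ a ∈ l := Iff.rfl

namespace SCG

variable {N T : Type} (G : SCG N T)

/-- Only these terminals get a conversion rule, which keeps the rule set finite for infinite `T`. -/
def rhsTerminals : Set T := {a | ∃ r ∈ G.rules, Sum.inr a ∈ r.2.1}

lemma rhsTerminals_finite : G.rhsTerminals.Finite := by
  refine (G.fin.biUnion fun r _ => r.2.1.finite_toSet.preimage Sum.inr_injective.injOn).subset ?_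
  rintro a ⟨r, hr, ha⟩
  exact Set.mem_biUnion hr ha

def liftRule (r : N × List (Symb N T) × Set (Symb N T) × Set (Symb N T)) :
    Symb N T × List (Symb (Symb N T) T) × Set (Symb N T) × Set (Symb N T) :=
  (Sum.inl r.1, r.2.1.map Sum.inl, r.2.2.1 \ {Sum.inl r.1}, r.2.2.2)

def terminalRule (a : T) : Symb N T × List (Symb (Symb N T) T) × Set (Symb N T) × Set (Symb N T) :=
  (Sum.inr a, [Sum.inr a], ∅, Set.range Sum.inl)

def toRCG : RCG (Symb N T) T where
  rules := liftRule '' {r ∈ G.rules | Sum.inl r.1 ∉ r.2.2.2} ∪ terminalRule '' G.rhsTerminals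
  fin := ((G.fin.subset (Set.sep_subset _ _)).image _).union (G.rhsTerminals_finite.image _)
  ne := by
    rintro r (⟨r₀, hr₀, rfl⟩ | ⟨a, _, rfl⟩)
    · simpa [liftRule] using G.ne r₀ hr₀.1
    · simp [terminalRule]
  start := Sum.inl G.start

variable {G}

lemma toRCG_step_map_inl {s t : List (Symb N T)} (h : G.Step true s t) :
    G.toRCG.Step false (s.map Sum.inl) (t.map Sum.inl) := by
  obtain ⟨A, x, Per, For, u, v, hr, rfl, rfl, hPer, hFor⟩ := h
  simp only [↓reduceIte, mem_alph, List.mem_append, List.mem_cons] at hPer hFor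
  have hAF : Sum.inl A ∉ For := fun h => hFor _ h (by simp)
  refine ⟨Sum.inl A, x.map Sum.inl, Per \ {Sum.inl A}, For, u.map Sum.inl, v.map Sum.inl,
    Or.inl ⟨(A, x, Per, For), ⟨hr, hAF⟩, rfl⟩, by simp, by simp, ?_, ?_⟩ <;>
    simp only [Bool.false_eq_true, ↓reduceIte, mem_alph, ← List.map_append,
      List.mem_map_of_injective Sum.inl_injective, List.mem_append]
  · rintro B ⟨hB, hBA : B ≠ Sum.inl A⟩
    simpa [hBA] using hPer hB
  · exact fun B hB h => hFor B hB (by tauto)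

lemma rhsTerminals_of_derives {s : List (Symb N T)}
    (h : Relation.ReflTransGen (G.Step true) [Sum.inl G.start] s) {a : T} (ha : Sum.inr a ∈ s) :
    a ∈ G.rhsTerminals := by
  induction h with
  | refl => simp at ha
  | tail _ hstep ih =>
    obtain ⟨A, x, Per, For, u, v, hr, rfl, rfl, -, -⟩ := hstep
    simp only [List.mem_append] at ha
    rcases ha with (ha | ha) | ha
    · exact ih (by simp [ha])
    · exact ⟨_, hr, ha⟩
    · exact ih (by simp [ha])

lemma toRCG_derives_convert (done w : List T) (hw : ∀ a ∈ w, a ∈ G.rhsTerminals) :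
    Relation.ReflTransGen (G.toRCG.Step false)
      (done.map Sum.inr ++ w.map (Sum.inl ∘ Sum.inr)) ((done ++ w).map Sum.inr) := by
  induction w generalizing done with
  | nil => simp [Relation.ReflTransGen.refl]
  | cons a w ih =>
    refine .head ⟨Sum.inr a, [Sum.inr a], ∅, Set.range Sum.inl, done.map Sum.inr,
      w.map (Sum.inl ∘ Sum.inr), Or.inr ⟨a, hw a (by simp), rfl⟩, by simp, rfl, by simp, ?_⟩ ?_
    · rintro _ ⟨B, rfl⟩
      simp
    · simpa using ih (done ++ [a]) fun b hb => hw b (by simp [hb])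

def unlift : Symb (Symb N T) T → Symb N T := Sum.elim id Sum.inr

@[simp] lemma unlift_inl (c : Symb N T) : unlift (Sum.inl c : Symb (Symb N T) T) = c := rfl

@[simp] lemma unlift_inr (a : T) : unlift (Sum.inr a : Symb (Symb N T) T) = Sum.inr a := rfl

lemma map_unlift_map_inl (l : List (Symb N T)) : (l.map Sum.inl).map unlift = l := by
  simp [Function.comp_def]

lemma map_unlift_map_inr (w : List T) : (w.map Sum.inr).map (unlift (N := N)) = w.map Sum.inr := by
  simp [Function.comp_def]

lemma mem_map_unlift {l : List (Symb (Symb N T) T)} (hl : ∀ a, Sum.inr a ∉ l) {c : Symb N T} :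
    c ∈ l.map unlift ↔ Sum.inl c ∈ l := by
  refine ⟨fun h => ?_, List.mem_map_of_mem⟩
  obtain ⟨y | a, hy, rfl⟩ := List.mem_map.mp h
  · exact hy
  · exact absurd hy (hl a)

variable (G) in
def IsSimulated (t : List (Symb (Symb N T) T)) : Prop :=
  Relation.ReflTransGen (G.Step true) [Sum.inl G.start] (t.map unlift) ∧
    ((∀ a, Sum.inr a ∉ t) ∨ ∀ A, Sum.inl (Sum.inl A) ∉ t)

lemma IsSimulated.liftRule_step {A : N} {x : List (Symb N T)} {Per For : Set (Symb N T)}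
    (hr : (A, x, Per, For) ∈ G.rules) (hAF : Sum.inl A ∉ For) {u v : List (Symb (Symb N T) T)}
    (h : IsSimulated G (u ++ Sum.inl (Sum.inl A) :: v))
    (hPer : ∀ B ∈ Per \ {Sum.inl A}, Sum.inl B ∈ u ++ v)
    (hFor : ∀ B ∈ For, Sum.inl B ∉ u ++ v) :
    IsSimulated G (u ++ x.map Sum.inl ++ v) := by
  obtain ⟨hreach, hlive⟩ := h
  have hunconv := hlive.resolve_right fun hconv => hconv A (by simp)
  have hmem (c) : c ∈ u.map unlift ∨ c ∈ v.map unlift ↔ Sum.inl c ∈ u ∨ Sum.inl c ∈ v := by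
    simpa using mem_map_unlift (l := u ++ v) fun a ha => hunconv a (by simp at ha ⊢; tauto)
  have hstep : G.Step true (u.map unlift ++ Sum.inl A :: v.map unlift)
      (u.map unlift ++ x ++ v.map unlift) := by
    refine ⟨A, x, Per, For, u.map unlift, v.map unlift, hr, rfl, rfl, fun c hc => ?_,
      fun c hc hc' => ?_⟩
    · simp only [↓reduceIte, mem_alph, List.mem_append, List.mem_cons]
      by_cases hcA : c = Sum.inl A
      · exact Or.inr (Or.inl hcA)
      · have := (hmem c).2 (by simpa using hPer c ⟨hc, hcA⟩)
        tauto
    · simp only [↓reduceIte, mem_alph, List.mem_append, List.mem_cons] at hc'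
      rcases hc' with hc' | rfl | hc'
      · exact hFor c hc (List.mem_append.mpr ((hmem c).1 (Or.inl hc')))
      · exact hAF hc
      · exact hFor c hc (List.mem_append.mpr ((hmem c).1 (Or.inr hc')))
  refine ⟨?_, Or.inl fun a ha => ?_⟩
  · rw [List.map_append, List.map_cons, unlift_inl] at hreach
    rw [List.map_append, List.map_append, map_unlift_map_inl]
    exact hreach.tail hstep
  · simp only [List.mem_append, List.mem_map, reduceCtorEq, and_false, exists_false] at ha
    exact hunconv a (by simp; tauto)

lemma IsSimulated.terminalRule_step {a : T} {u v : List (Symb (Symb N T) T)}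
    (h : IsSimulated G (u ++ Sum.inl (Sum.inr a) :: v))
    (hFor : ∀ B ∈ Set.range (Sum.inl : N → Symb N T), Sum.inl B ∉ u ++ v) :
    IsSimulated G (u ++ [Sum.inr a] ++ v) :=
  ⟨by simpa using h.1, Or.inr fun A hA => hFor _ ⟨A, rfl⟩ (by simpa using hA)⟩

lemma IsSimulated.step {t₁ t₂ : List (Symb (Symb N T) T)} (h : IsSimulated G t₁)
    (hstep : G.toRCG.Step false t₁ t₂) : IsSimulated G t₂ := by
  obtain ⟨_, _, _, _, u, v, hr, rfl, rfl, hPer, hFor⟩ := hstep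
  rcases hr with ⟨⟨A, x, Per, For⟩, ⟨hr, hAF⟩, hrule⟩ | ⟨a, -, hrule⟩
  · simp only [liftRule, Prod.mk.injEq] at hrule
    obtain ⟨rfl, rfl, rfl, rfl⟩ := hrule
    exact h.liftRule_step hr hAF hPer hFor
  · simp only [terminalRule, Prod.mk.injEq] at hrule
    obtain ⟨rfl, rfl, -, rfl⟩ := hrule
    exact h.terminalRule_step hFor

lemma isSimulated_of_derives {t : List (Symb (Symb N T) T)}
    (h : Relation.ReflTransGen (G.toRCG.Step false) [Sum.inl G.toRCG.start] t) :
    IsSimulated G t := by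
  induction h with
  | refl => exact ⟨.refl, Or.inl (by simp)⟩
  | tail _ hstep ih => exact ih.step hstep

theorem lang_toRCG : G.toRCG.Lang false = G.Lang true := by
  ext w
  simp only [RCG.Lang, SCG.Lang, Set.mem_ofPred_eq]
  constructor
  · intro hw
    simpa only [map_unlift_map_inr] using (isSimulated_of_derives hw).1
  · intro hw
    have hlift : Relation.ReflTransGen (G.toRCG.Step false) [Sum.inl (Sum.inl G.start)]
        (w.map (Sum.inl ∘ Sum.inr)) := by
      simpa [Function.onFun] using hw.lift (List.map Sum.inl) fun _ _ => toRCG_step_map_inl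
    have hconvert := toRCG_derives_convert [] w fun a ha =>
      rhsTerminals_of_derives hw (List.mem_map_of_mem ha)
    exact hlift.trans (by simpa using hconvert)

end SCG

/-- SC(1,1) ⊆ RC. -/
theorem sc11_subset_rc (T : Type) : SC11 T ⊆ RC T := by
  rintro L ⟨N, G, rfl⟩
  exact ⟨Symb N T, G.toRCG, SCG.lang_toRCG⟩
end

section
/- Every random context language (nonerasing) is generated by a semi-conditional grammar of degree (1,1) (nonerasing): RC ⊆ SC(1,1). -/
/-!
The simulating grammar carries a single marker resting on one symbol `α` of the sentential
form (`ready α`). To apply a rule `r = (A → x, Per, For)` of `G` at an occurrence of `A`, the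
marker becomes `seek r α`; one occurrence of `A` becomes `claim r α` (permitted by `seek r α`,
forbidden by another `claim r α`); the seek falls back to `α` (permitted by the claim); and the
claim becomes `check r Per For` (forbidden by the seek). This handshake singles out exactly one
occurrence of `A`, using contexts of size one only. The check marker then ticks off the
permitting and forbidding symbols one at a time; since it has replaced `A`, the rewritten
occurrence is not counted, as in the random context condition on `alph (uv)`. Finally
`check r ∅ ∅` is rewritten to `x`, the marker moving onto the first symbol of `x`, and a marker
on a terminal may dissolve.

For soundness, every derivable form has at most one marker, or a `seek r α`/`claim r α` pair, and
erasing the markers gives a sentential form of `G`.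
-/

lemma List.append_cons_eq_append_cons {α : Type*} {u v u₀ v₀ : List α} {a b : α}
    (h : u ++ a :: v = u₀ ++ b :: v₀) :
    (u = u₀ ∧ a = b ∧ v = v₀) ∨ (∃ m, u₀ = u ++ a :: m ∧ v = m ++ b :: v₀) ∨
      (∃ m, u = u₀ ++ b :: m ∧ v₀ = m ++ a :: v) := by
  rcases List.append_eq_append_iff.1 h with
    ⟨_ | ⟨c, m⟩, rfl, h'⟩ | ⟨_ | ⟨c, m⟩, rfl, h'⟩ <;> simp_all

namespace RCG

variable {N T : Type}

abbrev Rule (N T : Type) := N × List (Symb N T) × Set N × Set N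

inductive Marker (N T : Type)
  | ready : Symb N T → Marker N T
  | seek : Rule N T → Symb N T → Marker N T
  | claim : Rule N T → Symb N T → Marker N T
  | check : Rule N T → Set N → Set N → Marker N T

abbrev SimSymb (N T : Type) := Symb (N ⊕ Marker N T) T

def Marker.base : Marker N T → Symb N T
  | ready α | seek _ α => α
  | claim r _ | check r _ _ => Sum.inl r.1

def lift : Symb N T → SimSymb N T := Sum.map Sum.inl id

abbrev mark (c : Marker N T) : SimSymb N T := Sum.inl (Sum.inr c)

def proj : SimSymb N T → Symb N T := Sum.elim (Sum.elim Sum.inl Marker.base) Sum.inr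

def markers (h : List (SimSymb N T)) : List (Marker N T) :=
  h.filterMap (Sum.elim Sum.getRight? fun _ => none)

def commit : List (Symb N T) → List (SimSymb N T)
  | [] => []
  | a :: xs => mark (.ready a) :: xs.map lift

@[simp] lemma inl_inl_eq_lift (B : N) : (Sum.inl (Sum.inl B) : SimSymb N T) = lift (.inl B) :=
  rfl
@[simp] lemma inr_eq_lift (t : T) : (Sum.inr t : SimSymb N T) = lift (.inr t) := rfl
@[simp] lemma proj_lift (s : Symb N T) : proj (lift s) = s := by cases s <;> rfl
@[simp] lemma proj_comp_lift : (proj ∘ lift : Symb N T → Symb N T) = id := funext proj_lift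
@[simp] lemma proj_mark (c : Marker N T) : proj (mark c) = c.base := rfl

lemma lift_injective : Function.Injective (lift : Symb N T → SimSymb N T) :=
  Sum.map_injective.2 ⟨Sum.inl_injective, fun _ _ => id⟩

@[simp] lemma lift_inj {s s' : Symb N T} : lift s = lift s' ↔ s = s' := lift_injective.eq_iff
@[simp] lemma mark_ne_lift (c : Marker N T) (s : Symb N T) : mark c ≠ lift s := by
  intro h; cases s <;> cases h
@[simp] lemma lift_ne_mark (c : Marker N T) (s : Symb N T) : lift s ≠ mark c :=
  (mark_ne_lift c s).symm

@[simp] lemma markers_nil : markers ([] : List (SimSymb N T)) = [] := rfl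
@[simp] lemma markers_cons_mark (c : Marker N T) (h : List (SimSymb N T)) :
    markers (mark c :: h) = c :: markers h := rfl
@[simp] lemma markers_cons_lift (s : Symb N T) (h : List (SimSymb N T)) :
    markers (lift s :: h) = markers h := by cases s <;> rfl
@[simp] lemma markers_append (h h' : List (SimSymb N T)) :
    markers (h ++ h') = markers h ++ markers h' := List.filterMap_append
@[simp] lemma markers_map_lift (g : List (Symb N T)) : markers (g.map lift) = [] := by
  induction g <;> simp_all

@[simp] lemma mark_mem_iff {c : Marker N T} {h : List (SimSymb N T)} :
    mark c ∈ h ↔ c ∈ markers h := by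
  induction h with
  | nil => simp
  | cons s h ih => rcases s with (B | c') | t <;> simp_all

lemma map_lift_map_proj {h : List (SimSymb N T)} (hh : markers h = []) :
    (h.map proj).map lift = h := by
  induction h with
  | nil => rfl
  | cons s h ih => rcases s with (B | c) | t <;> simp_all

@[simp] lemma commit_eq_nil {x : List (Symb N T)} : commit x = [] ↔ x = [] := by
  cases x <;> simp [commit]

@[simp] lemma map_proj_commit (x : List (Symb N T)) : (commit x).map proj = x := by
  cases x <;> simp [commit, Marker.base]

def Marker.Paired : Marker N T → Prop
  | seek .. | claim .. => True
  | ready _ | check .. => False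

inductive Shape : List (Marker N T) → Prop
  | nil : Shape []
  | single (c : Marker N T) : Shape [c]
  | seek_claim (r : Rule N T) (α : Symb N T) : Shape [.seek r α, .claim r α]
  | claim_seek (r : Rule N T) (α : Symb N T) : Shape [.claim r α, .seek r α]

namespace Shape

variable {a b L : List (Marker N T)} {r : Rule N T} {α : Symb N T}

lemma eq_nil_of_not_paired {c : Marker N T} (hs : Shape (a ++ c :: b)) (hc : ¬c.Paired) :
    a = [] ∧ b = [] := by
  generalize hL : a ++ c :: b = L at hs
  cases hs <;> simp only [List.append_eq_cons_iff, List.cons_eq_append_iff,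
    List.append_eq_nil_iff, List.cons.injEq, List.nil_eq, reduceCtorEq] at hL <;>
    aesop (add norm Marker.Paired)

lemma eq_nil_of_claim (hs : Shape (a ++ .claim r α :: b)) (h : .seek r α ∉ a ++ b) :
    a = [] ∧ b = [] := by
  generalize hL : a ++ .claim r α :: b = L at hs
  cases hs <;> simp_all [List.append_eq_cons_iff, List.cons_eq_append_iff]

lemma eq_claim_of_seek (hs : Shape (a ++ .seek r α :: b)) (h : .claim r α ∈ a ++ b) :
    a ++ b = [.claim r α] := by
  generalize hL : a ++ .seek r α :: b = L at hs
  cases hs <;> simp_all [List.append_eq_cons_iff, List.cons_eq_append_iff]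

lemma eq_seek (hs : Shape L) (hseek : .seek r α ∈ L) (hclaim : .claim r α ∉ L) :
    L = [.seek r α] := by
  cases hs <;> simp_all

lemma of_eq_seek (h : a ++ b = [.seek r α]) : Shape (a ++ .claim r α :: b) := by
  rcases List.append_eq_singleton_iff.1 h with ⟨rfl, rfl⟩ | ⟨rfl, rfl⟩
  · exact .claim_seek r α
  · exact .seek_claim r α

end Shape

variable (G : RCG N T)

def Reachable (g : List (Symb N T)) : Prop :=
  Relation.ReflTransGen (G.Step false) [Sum.inl G.start] g

def alphabet : Set (Symb N T) := insert (Sum.inl G.start) (⋃ r ∈ G.rules, {s | s ∈ r.2.1})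

/- A rule with an infinite permitting set never applies, and forbidding symbols outside the
alphabet never occur: dropping both keeps the simulating grammar finite. -/
def Usable (r : Rule N T) : Prop := r ∈ G.rules ∧ r.2.2.1.Finite

def forbidden (r : Rule N T) : Set N := {q ∈ r.2.2.2 | Sum.inl q ∈ G.alphabet}

def initCheck (r : Rule N T) : Marker N T := .check r r.2.2.1 (G.forbidden r)

inductive SimRule :
    (N ⊕ Marker N T) × List (SimSymb N T) × Set (SimSymb N T) × Set (SimSymb N T) → Prop
  | checkHere {r} : G.Usable r →
      SimRule (.inr (.ready (.inl r.1)), [mark (G.initCheck r)], ∅, ∅)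
  | seek {r α} : G.Usable r → α ∈ G.alphabet →
      SimRule (.inr (.ready α), [mark (.seek r α)], ∅, ∅)
  | claim {r α} : G.Usable r → α ∈ G.alphabet →
      SimRule (.inl r.1, [mark (.claim r α)], {mark (.seek r α)}, {mark (.claim r α)})
  | release {r α} : G.Usable r → α ∈ G.alphabet →
      SimRule (.inr (.seek r α), [lift α], {mark (.claim r α)}, ∅)
  | arm {r α} : G.Usable r → α ∈ G.alphabet →
      SimRule (.inr (.claim r α), [mark (G.initCheck r)], ∅, {mark (.seek r α)})
  | permit {r P F p} : G.Usable r → P ⊆ r.2.2.1 → F ⊆ G.forbidden r → p ∈ P →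
      SimRule (.inr (.check r P F), [mark (.check r (P \ {p}) F)], {lift (.inl p)}, ∅)
  | forbid {r P F q} : G.Usable r → P ⊆ r.2.2.1 → F ⊆ G.forbidden r → q ∈ F →
      SimRule (.inr (.check r P F), [mark (.check r P (F \ {q}))], ∅, {lift (.inl q)})
  | apply {r} : G.Usable r → SimRule (.inr (.check r ∅ ∅), commit r.2.1, ∅, ∅)
  | finish {t} : Sum.inr t ∈ G.alphabet →
      SimRule (.inr (.ready (.inr t)), [Sum.inr t], ∅, ∅)

lemma alphabet_finite : G.alphabet.Finite :=
  (G.fin.biUnion fun r _ => r.2.1.finite_toSet).insert _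

lemma forbidden_finite (r : Rule N T) : (G.forbidden r).Finite :=
  (G.alphabet_finite.preimage Sum.inl_injective.injOn).subset fun _ hq => hq.2

lemma setOf_usable_finite : {r | G.Usable r}.Finite := G.fin.subset fun _ hr => hr.1

lemma setOf_simRule_finite : {ρ | G.SimRule ρ}.Finite := by
  refine Set.Finite.subset (s := (⋃ r ∈ {r | G.Usable r},
      ({(.inr (.ready (.inl r.1)), [mark (G.initCheck r)], ∅, ∅),
        (.inr (.check r ∅ ∅), commit r.2.1, ∅, ∅)} ∪
      (⋃ α ∈ G.alphabet,
        {(.inr (.ready α), [mark (.seek r α)], ∅, ∅),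
         (.inl r.1, [mark (.claim r α)], {mark (.seek r α)}, {mark (.claim r α)}),
         (.inr (.seek r α), [lift α], {mark (.claim r α)}, ∅),
         (.inr (.claim r α), [mark (G.initCheck r)], ∅, {mark (.seek r α)})}) ∪
      (⋃ P ∈ r.2.2.1.powerset, ⋃ F ∈ (G.forbidden r).powerset, ⋃ p ∈ r.2.2.1 ∪ F,
        {(.inr (.check r P F), [mark (.check r (P \ {p}) F)], {lift (.inl p)}, ∅),
         (.inr (.check r P F), [mark (.check r P (F \ {p}))], ∅, {lift (.inl p)})}))) ∪
    ⋃ t ∈ Sum.inr ⁻¹' G.alphabet, {(.inr (.ready (.inr t)), [Sum.inr t], ∅, ∅)}) ?_ ?_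
  · refine (G.setOf_usable_finite.biUnion fun r hr => ?_).union
      ((G.alphabet_finite.preimage Sum.inr_injective.injOn).biUnion fun _ _ => Set.toFinite _)
    refine ((Set.toFinite _).union (G.alphabet_finite.biUnion fun _ _ => Set.toFinite _)).union
      (hr.2.finite_subsets.biUnion fun P _ => (G.forbidden_finite r).finite_subsets.biUnion
        fun F hF => (hr.2.union ((G.forbidden_finite r).subset hF)).biUnion
          fun _ _ => Set.toFinite _)
  · rintro ρ hρ
    cases hρ with
    | checkHere hr | apply hr => exact Or.inl (Set.mem_biUnion hr (Or.inl (Or.inl (by simp))))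
    | seek hr hα | claim hr hα | release hr hα | arm hr hα =>
      exact Or.inl (Set.mem_biUnion hr (Or.inl (Or.inr (Set.mem_biUnion hα (by simp)))))
    | permit hr hP hF hp =>
      exact Or.inl (Set.mem_biUnion hr (Or.inr (Set.mem_biUnion hP (Set.mem_biUnion hF
        (Set.mem_biUnion (Or.inl (hP hp)) (by simp))))))
    | forbid hr hP hF hq =>
      exact Or.inl (Set.mem_biUnion hr (Or.inr (Set.mem_biUnion hP (Set.mem_biUnion hF
        (Set.mem_biUnion (Or.inr hq) (by simp))))))
    | finish ht => exact Or.inr (Set.mem_biUnion ht rfl)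

def toSC : SCG (N ⊕ Marker N T) T where
  rules := {ρ | G.SimRule ρ}
  fin := G.setOf_simRule_finite
  ne := by
    rintro ρ hρ
    cases hρ with
    | apply hr => simpa using G.ne _ hr.1
    | _ => simp
  per1 := by rintro ρ hρ; cases hρ <;> simp
  for1 := by rintro ρ hρ; cases hρ <;> simp
  start := .inr (.ready (.inl G.start))

abbrev Derives (h₁ h₂ : List (SimSymb N T)) : Prop :=
  Relation.ReflTransGen (G.toSC.Step true) h₁ h₂

lemma toSC_step {A x Per For} (hρ : G.SimRule (A, x, Per, For)) (u v : List (SimSymb N T))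
    (hPer : Per ⊆ alph (u ++ Sum.inl A :: v))
    (hFor : ∀ a ∈ For, a ∉ alph (u ++ Sum.inl A :: v)) :
    G.toSC.Step true (u ++ Sum.inl A :: v) (u ++ x ++ v) :=
  ⟨A, x, Per, For, u, v, hρ, rfl, rfl, hPer, hFor⟩

variable {G} in
lemma Reachable.mem_alphabet {g : List (Symb N T)} (hg : G.Reachable g) {s : Symb N T}
    (hs : s ∈ g) : s ∈ G.alphabet := by
  induction hg generalizing s with
  | refl => exact (List.mem_singleton.1 hs) ▸ Set.mem_insert _ _
  | tail _ hstep ih =>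
    obtain ⟨A, x, Per, For, u, v, hr, rfl, rfl, -, -⟩ := hstep
    simp only [List.mem_append] at hs
    rcases hs with (hs | hs) | hs
    · exact ih (by simp [hs])
    · exact Or.inr (Set.mem_biUnion hr hs)
    · exact ih (by simp [hs])

variable {G} in
lemma Reachable.rewrite {g₁ g₂ : List (Symb N T)} {r : Rule N T}
    (hg : G.Reachable (g₁ ++ Sum.inl r.1 :: g₂)) (hr : r ∈ G.rules)
    (hPer : ∀ p ∈ r.2.2.1, Sum.inl p ∈ g₁ ++ g₂)
    (hFor : ∀ q ∈ G.forbidden r, Sum.inl q ∉ g₁ ++ g₂) :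
    G.Reachable (g₁ ++ r.2.1 ++ g₂) := by
  refine hg.tail ⟨r.1, r.2.1, r.2.2.1, r.2.2.2, g₁, g₂, hr, rfl, rfl, hPer,
    fun q hq hmem => hFor q ⟨hq, hg.mem_alphabet ?_⟩ hmem⟩
  exact List.mem_append.2 ((List.mem_append.1 hmem).imp id (List.mem_cons_of_mem _))

/-- `check r P F` has verified, in `h`, all conditions of `r` except those in `P` and `F`. -/
def Checked (h : List (SimSymb N T)) : Marker N T → Prop
  | .check r P F => (∀ p ∈ r.2.2.1, p ∈ P ∨ lift (.inl p) ∈ h) ∧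
      (∀ q ∈ G.forbidden r, q ∈ F ∨ lift (.inl q) ∉ h)
  | _ => True

lemma checked_initCheck (h : List (SimSymb N T)) (r : Rule N T) :
    G.Checked h (G.initCheck r) :=
  ⟨fun _ hp => Or.inl hp, fun _ hq => Or.inl hq⟩

structure Sim (h : List (SimSymb N T)) : Prop where
  reachable : G.Reachable (h.map proj)
  shape : Shape (markers h)
  checked : ∀ c ∈ markers h, G.Checked h c

namespace Sim

variable {G} {u v : List (SimSymb N T)} {r : Rule N T} {α : Symb N T}

lemma shape_mark {c : Marker N T} (hs : G.Sim (u ++ mark c :: v)) :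
    Shape (markers u ++ c :: markers v) := by
  simpa using hs.shape

lemma replace {c : Marker N T} {x : List (SimSymb N T)} (hs : G.Sim (u ++ mark c :: v))
    (hu : markers u = []) (hv : markers v = []) (hproj : x.map proj = [c.base])
    (hx : Shape (markers x)) (hchecked : ∀ c ∈ markers x, G.Checked (u ++ x ++ v) c) :
    G.Sim (u ++ x ++ v) where
  reachable := by simpa [hproj] using hs.reachable
  shape := by simpa [hu, hv] using hx
  checked c hc := hchecked c (by simpa [hu, hv] using hc)

lemma claim (hs : G.Sim (u ++ lift (.inl r.1) :: v))
    (hseek : Marker.seek r α ∈ markers u ++ markers v)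
    (hclaim : Marker.claim r α ∉ markers u ++ markers v) :
    G.Sim (u ++ [mark (.claim r α)] ++ v) := by
  have h : markers u ++ markers v = [.seek r α] := by
    simpa using hs.shape.eq_seek (by simpa using hseek) (by simpa using hclaim)
  refine ⟨by simpa [Marker.base] using hs.reachable, by simpa using Shape.of_eq_seek h, ?_⟩
  rcases List.append_eq_singleton_iff.1 h with ⟨hu, hv⟩ | ⟨hu, hv⟩ <;>
    simp [hu, hv, Checked]

lemma release (hs : G.Sim (u ++ mark (.seek r α) :: v))
    (hclaim : Marker.claim r α ∈ markers u ++ markers v) :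
    G.Sim (u ++ [lift α] ++ v) := by
  have h := hs.shape_mark.eq_claim_of_seek hclaim
  refine ⟨by simpa [Marker.base] using hs.reachable, by simpa [h] using Shape.single _, ?_⟩
  simp [h, Checked]

lemma apply (hs : G.Sim (u ++ mark (.check r ∅ ∅) :: v)) (hr : r ∈ G.rules) :
    G.Sim (u ++ commit r.2.1 ++ v) := by
  obtain ⟨hu, hv⟩ := hs.shape_mark.eq_nil_of_not_paired id
  obtain ⟨hPer, hFor⟩ : G.Checked _ (.check r ∅ ∅) := hs.checked _ (by simp)
  obtain ⟨a, xs, hx⟩ := List.exists_cons_of_ne_nil (G.ne r hr)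
  have hlift (s : Symb N T) :
      lift s ∈ u ++ mark (.check r ∅ ∅) :: v ↔ s ∈ u.map proj ++ v.map proj := by
    rw [← map_lift_map_proj hu, ← map_lift_map_proj hv]; simp
  refine ⟨?_, by simp [hu, hv, hx, commit, Shape.single], by simp [hu, hv, hx, commit, Checked]⟩
  simpa using Reachable.rewrite (by simpa [Marker.base] using hs.reachable) hr
    (fun p hp => (hlift _).1 ((hPer p hp).resolve_left (Set.notMem_empty p)))
    (fun q hq h => ((hFor q hq).resolve_left (Set.notMem_empty q)) ((hlift _).2 h))

lemma permit {P F : Set N} {p : N} (hs : G.Sim (u ++ mark (.check r P F) :: v))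
    (hp : lift (.inl p) ∈ u ∨ lift (.inl p) ∈ v) :
    G.Sim (u ++ [mark (.check r (P \ {p}) F)] ++ v) := by
  obtain ⟨hu, hv⟩ := hs.shape_mark.eq_nil_of_not_paired id
  obtain ⟨hPer, hFor⟩ : G.Checked _ (.check r P F) := hs.checked _ (by simp)
  refine hs.replace hu hv rfl (.single _) ?_
  simp only [markers_cons_mark, markers_nil, List.mem_singleton, forall_eq]
  refine ⟨fun p' hp' => ?_, fun q hq => by simpa using hFor q hq⟩
  by_cases e : p' = p
  · simpa [e] using hp
  · simpa [e] using hPer p' hp'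

lemma forbid {P F : Set N} {q : N} (hs : G.Sim (u ++ mark (.check r P F) :: v))
    (hq : lift (.inl q) ∉ u ∧ lift (.inl q) ∉ v) :
    G.Sim (u ++ [mark (.check r P (F \ {q}))] ++ v) := by
  obtain ⟨hu, hv⟩ := hs.shape_mark.eq_nil_of_not_paired id
  obtain ⟨hPer, hFor⟩ : G.Checked _ (.check r P F) := hs.checked _ (by simp)
  refine hs.replace hu hv rfl (.single _) ?_
  simp only [markers_cons_mark, markers_nil, List.mem_singleton, forall_eq]
  refine ⟨fun p hp => by simpa using hPer p hp, fun q' hq' => ?_⟩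
  by_cases e : q' = q
  · simpa [e] using hq
  · simpa [e] using hFor q' hq'

lemma step {h₁ h₂ : List (SimSymb N T)} (hs : G.Sim h₁) (hstep : G.toSC.Step true h₁ h₂) :
    G.Sim h₂ := by
  obtain ⟨A, x, Per, For, u, v, hρ, rfl, rfl, hPer, hFor⟩ := hstep
  simp only [if_true, alph] at hPer hFor
  cases hρ with
  | checkHere hr =>
    obtain ⟨hu, hv⟩ := hs.shape_mark.eq_nil_of_not_paired id
    exact hs.replace hu hv rfl (.single _) (by simpa using G.checked_initCheck _ _)
  | seek hr hα =>
    obtain ⟨hu, hv⟩ := hs.shape_mark.eq_nil_of_not_paired id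
    exact hs.replace hu hv rfl (.single _) (by simp [Checked])
  | claim hr hα =>
    exact Sim.claim (by simpa using hs) (by simpa using hPer rfl) (by simpa using hFor _ rfl)
  | release hr hα => exact hs.release (by simpa using hPer rfl)
  | arm hr hα =>
    obtain ⟨hu, hv⟩ := hs.shape_mark.eq_nil_of_claim (by simpa using hFor _ rfl)
    exact hs.replace hu hv rfl (.single _) (by simpa using G.checked_initCheck _ _)
  | permit hr hP hF hp => exact hs.permit (by simpa using hPer rfl)
  | forbid hr hP hF hq => exact hs.forbid (by simpa using hFor _ rfl)
  | apply hr => exact hs.apply hr.1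
  | finish ht =>
    obtain ⟨hu, hv⟩ := hs.shape_mark.eq_nil_of_not_paired id
    exact hs.replace hu hv rfl (by simpa using Shape.nil) (by simp)

end Sim

lemma sim_of_derives {h : List (SimSymb N T)} (hd : G.Derives [Sum.inl G.toSC.start] h) :
    G.Sim h := by
  induction hd with
  | refl => exact ⟨.refl, .single _, by simp [toSC, Checked]⟩
  | tail _ hstep ih => exact ih.step hstep

lemma lang_toSC_subset : G.toSC.Lang true ⊆ G.Lang false := fun w hw => by
  have h := (G.sim_of_derives hw).reachable
  simp only [List.map_map, Function.comp_def, inr_eq_lift, proj_lift] at h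
  exact h

section Completeness

variable {G} {r : Rule N T} {α : Symb N T}

lemma step_single {A : N ⊕ Marker N T} {s : SimSymb N T} {Per For : Set (SimSymb N T)}
    (hρ : G.SimRule (A, [s], Per, For)) (p q : List (SimSymb N T))
    (hPer : ∀ a ∈ Per, a ∈ p ++ Sum.inl A :: q)
    (hFor : ∀ a ∈ For, a ∉ p ++ Sum.inl A :: q) :
    G.toSC.Step true (p ++ Sum.inl A :: q) (p ++ s :: q) := by
  simpa using G.toSC_step hρ p q hPer hFor

lemma derives_move_right (hr : G.Usable r) (hα : α ∈ G.alphabet) (u m v : List (Symb N T)) :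
    G.Derives (u.map lift ++ mark (.ready α) :: m.map lift ++ lift (.inl r.1) :: v.map lift)
      ((u ++ α :: m).map lift ++ mark (G.initCheck r) :: v.map lift) := by
  have h₁ := step_single (.seek hr hα) (u.map lift)
    (m.map lift ++ lift (.inl r.1) :: v.map lift) (by simp) (by simp)
  have h₂ := step_single (.claim hr hα) (u.map lift ++ mark (.seek r α) :: m.map lift)
    (v.map lift) (by simp) (by simp)
  have h₃ := step_single (.release hr hα) (u.map lift)
    (m.map lift ++ mark (.claim r α) :: v.map lift) (by simp) (by simp)
  have h₄ := step_single (.arm hr hα) (u.map lift ++ lift α :: m.map lift) (v.map lift)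
    (by simp) (by simp)
  simp only [List.append_assoc, List.cons_append, List.map_append, List.map_cons]
    at h₁ h₂ h₃ h₄ ⊢
  exact (((Relation.ReflTransGen.single h₁).tail h₂).tail h₃).tail h₄

lemma derives_move_left (hr : G.Usable r) (hα : α ∈ G.alphabet) (u m v : List (Symb N T)) :
    G.Derives (u.map lift ++ lift (.inl r.1) :: m.map lift ++ mark (.ready α) :: v.map lift)
      (u.map lift ++ mark (G.initCheck r) :: (m ++ α :: v).map lift) := by
  have h₁ := step_single (.seek hr hα) (u.map lift ++ lift (.inl r.1) :: m.map lift)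
    (v.map lift) (by simp) (by simp)
  have h₂ := step_single (.claim hr hα) (u.map lift)
    (m.map lift ++ mark (.seek r α) :: v.map lift) (by simp) (by simp)
  have h₃ := step_single (.release hr hα) (u.map lift ++ mark (.claim r α) :: m.map lift)
    (v.map lift) (by simp) (by simp)
  have h₄ := step_single (.arm hr hα) (u.map lift) (m.map lift ++ lift α :: v.map lift)
    (by simp) (by simp)
  simp only [List.append_assoc, List.cons_append, List.map_append, List.map_cons]
    at h₁ h₂ h₃ h₄ ⊢
  exact (((Relation.ReflTransGen.single h₁).tail h₂).tail h₃).tail h₄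

lemma derives_initCheck (hr : G.Usable r) (hα : α ∈ G.alphabet)
    {u v u₀ v₀ : List (Symb N T)} (h : u ++ α :: v = u₀ ++ Sum.inl r.1 :: v₀) :
    G.Derives (u.map lift ++ mark (.ready α) :: v.map lift)
      (u₀.map lift ++ mark (G.initCheck r) :: v₀.map lift) := by
  rcases List.append_cons_eq_append_cons h with
    ⟨rfl, rfl, rfl⟩ | ⟨m, rfl, rfl⟩ | ⟨m, rfl, rfl⟩
  · exact .single (step_single (.checkHere hr) _ _ (by simp) (by simp))
  · simpa using derives_move_right hr hα u m v₀
  · simpa using derives_move_left hr hα u₀ m v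

lemma derives_permit (hr : G.Usable r) {u v : List (Symb N T)} {F : Set N}
    (hF : F ⊆ G.forbidden r) (hPer : ∀ p ∈ r.2.2.1, Sum.inl p ∈ u ++ v) :
    G.Derives (u.map lift ++ mark (.check r r.2.2.1 F) :: v.map lift)
      (u.map lift ++ mark (.check r ∅ F) :: v.map lift) := by
  refine hr.2.induction_on_subset (motive := fun P _ =>
    G.Derives (u.map lift ++ mark (.check r P F) :: v.map lift)
      (u.map lift ++ mark (.check r ∅ F) :: v.map lift)) _ .refl ?_
  intro p P hp hP hpP ih
  refine .head ?_ ih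
  simpa [hpP] using step_single (.permit hr (Set.insert_subset hp hP) hF (Set.mem_insert p P))
    (u.map lift) (v.map lift) (by simpa using hPer p hp) (by simp)

lemma derives_forbid (hr : G.Usable r) {u v : List (Symb N T)}
    (hFor : ∀ q ∈ G.forbidden r, Sum.inl q ∉ u ++ v) :
    G.Derives (u.map lift ++ mark (.check r ∅ (G.forbidden r)) :: v.map lift)
      (u.map lift ++ mark (.check r ∅ ∅) :: v.map lift) := by
  refine (G.forbidden_finite r).induction_on_subset (motive := fun F _ =>
    G.Derives (u.map lift ++ mark (.check r ∅ F) :: v.map lift)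
      (u.map lift ++ mark (.check r ∅ ∅) :: v.map lift)) _ .refl ?_
  intro q F hq hF hqF ih
  refine .head ?_ ih
  simpa [hqF] using step_single (.forbid hr (Set.empty_subset _) (Set.insert_subset hq hF)
    (Set.mem_insert q F)) (u.map lift) (v.map lift) (by simp)
    (by rintro _ rfl; simpa using hFor q hq)

lemma derives_commit (hr : G.Usable r) {u v : List (Symb N T)}
    (hPer : ∀ p ∈ r.2.2.1, Sum.inl p ∈ u ++ v)
    (hFor : ∀ q ∈ G.forbidden r, Sum.inl q ∉ u ++ v) :
    G.Derives (u.map lift ++ mark (G.initCheck r) :: v.map lift)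
      (u.map lift ++ commit r.2.1 ++ v.map lift) :=
  ((derives_permit hr subset_rfl hPer).trans (derives_forbid hr hFor)).tail
    (G.toSC_step (.apply hr) _ _ (by simp) (by simp))

end Completeness

lemma exists_derives_of_reachable {g : List (Symb N T)} (hg : G.Reachable g) :
    ∃ u α v, g = u ++ α :: v ∧
      G.Derives [Sum.inl G.toSC.start] (u.map lift ++ mark (.ready α) :: v.map lift) := by
  induction hg with
  | refl => exact ⟨[], _, [], rfl, .refl⟩
  | @tail g _ hg hstep ih =>
    obtain ⟨u, α, v, rfl, hd⟩ := ih
    obtain ⟨A, x, Per, For, u₀, v₀, hr, hdec, rfl, hPer, hFor⟩ := hstep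
    have hPer' : ∀ p ∈ Per, Sum.inl p ∈ u₀ ++ v₀ := hPer
    have hr' : G.Usable (A, x, Per, For) :=
      ⟨hr, ((u₀ ++ v₀).finite_toSet.preimage Sum.inl_injective.injOn).subset hPer'⟩
    have hα : α ∈ G.alphabet := Reachable.mem_alphabet hg (by simp)
    obtain ⟨a, xs, rfl⟩ := List.exists_cons_of_ne_nil (G.ne _ hr)
    refine ⟨u₀, a, xs ++ v₀, by simp, ?_⟩
    simpa [commit] using (hd.trans (derives_initCheck hr' hα hdec)).trans
      (derives_commit hr' hPer' fun q hq => hFor q hq.1)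

lemma lang_subset_toSC : G.Lang false ⊆ G.toSC.Lang true := fun w hw => by
  obtain ⟨u, α, v, hw', hd⟩ := G.exists_derives_of_reachable hw
  obtain ⟨t, -, rfl⟩ := List.mem_map.1 (hw' ▸ List.mem_append_right u List.mem_cons_self)
  have ht : Sum.inr t ∈ G.alphabet := Reachable.mem_alphabet hw (by rw [hw']; simp)
  have hfinish := step_single (.finish ht) (u.map lift) (v.map lift) (by simp) (by simp)
  have hlift : (u ++ Sum.inr t :: v).map lift = w.map Sum.inr := by
    rw [← hw']; simp [Function.comp_def]
  change G.Derives _ (w.map Sum.inr)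
  simpa [← hlift] using hd.tail hfinish

theorem lang_toSC : G.toSC.Lang true = G.Lang false :=
  G.lang_toSC_subset.antisymm G.lang_subset_toSC

end RCG

/-- RC ⊆ SC(1,1). -/
theorem rc_subset_sc11 (T : Type) : RC T ⊆ SC11 T := by
  rintro L ⟨N, G, rfl⟩
  exact ⟨_, G.toSC, G.lang_toSC⟩
end
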